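/- arXiv:math/0303055 — 3 statements merged into one kernel-verified Lean document; each statement's English description precedes it below -/
import Mathlib

section
/- Let g : ℂ → ℂ be holomorphic and nowhere vanishing on the punctured unit disk D* = {z ∈ ℂ : 0 < |z| < 1}, and suppose there is a function h : ℂ → ℂ holomorphic on the unit disk D = {z ∈ ℂ : |z| < 1} such that h(z) = z · g'(z)/g(z) for all z ∈ D*. Then g is meromorphic at 0 (i.e., MeromorphicAt g 0: some power zⁿ·g(z) extends analytically across 0). -/
/-! Where `g ≠ 0` the hypothesis reads `z g'(z) = h(z) g(z)`, and `‖h‖ ≤ n` near `0`. Along a ray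
`s ↦ e^{-s} w` with `‖w‖ = 1/2` the function `G(s) = g(e^{-s} w)` satisfies `G' = -h G`, so
Grönwall's inequality gives `‖G(s)‖ ≤ ‖g w‖ e^{n s}`, that is `‖g z‖ = O(‖z‖^{-n})`. Thus `z^n g` is
bounded near `0`, and by Riemann's removable singularity theorem `z^{n+1} g` is analytic at `0`. -/

open Complex Filter Topology

section

variable {E : Type*} [NormedAddCommGroup E] [NormedSpace ℂ E]

theorem Complex.meromorphicAt_of_isBoundedUnder_pow_smul [CompleteSpace E] {f : ℂ → E} {c : ℂ}
    {n : ℕ} (hd : ∀ᶠ z in 𝓝[≠] c, DifferentiableAt ℂ f z)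
    (hb : IsBoundedUnder (· ≤ ·) (𝓝[≠] c) fun z ↦ ‖(z - c) ^ n • f z‖) :
    MeromorphicAt f c := by
  set F : ℂ → E := fun z ↦ (z - c) ^ n • f z
  have hFd : ∀ᶠ z in 𝓝[≠] c, DifferentiableAt ℂ F z :=
    hd.mono fun z hz ↦ ((differentiableAt_id.sub_const c).pow n).smul hz
  have hFb : IsBoundedUnder (· ≤ ·) (𝓝[≠] c) fun z ↦ ‖F z - F c‖ := by
    obtain ⟨B, hB⟩ := hb
    exact isBoundedUnder_of_eventually_le (a := B + ‖F c‖)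
      ((eventually_map.1 hB).mono fun z hz ↦ norm_sub_le_of_le hz le_rfl)
  set G := Function.update F c (limUnder (𝓝[≠] c) F)
  have hG : AnalyticAt ℂ G c := by
    refine analyticAt_of_differentiable_on_punctured_nhds_of_continuousAt ?_
      (continuousAt_update_same.2
        (tendsto_limUnder_of_differentiable_on_punctured_nhds_of_bounded_under hFd hFb))
    filter_upwards [hFd, self_mem_nhdsWithin] with z hz hzc
    exact hz.congr_of_eventuallyEq
      ((isOpen_ne.eventually_mem hzc).mono fun y hy ↦ Function.update_of_ne hy _ _)
  have hfG : (fun z ↦ (z - c) • G z) = fun z ↦ (z - c) ^ (n + 1) • f z := by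
    ext z
    rcases eq_or_ne z c with rfl | hz
    · simp
    · simp [G, F, Function.update_of_ne hz, pow_succ', mul_smul]
  exact ⟨n + 1, hfG ▸ (analyticAt_id.sub analyticAt_const).smul hG⟩

theorem norm_le_mul_exp_of_norm_smul_deriv_le {g : ℂ → E} {w : ℂ} {M : ℝ} (hw : w ≠ 0)
    (hg : ∀ z : ℂ, 0 < ‖z‖ → ‖z‖ ≤ ‖w‖ → DifferentiableAt ℂ g z)
    (hgM : ∀ z : ℂ, 0 < ‖z‖ → ‖z‖ ≤ ‖w‖ → ‖z • deriv g z‖ ≤ M * ‖g z‖)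
    {s : ℝ} (hs : 0 ≤ s) :
    ‖g (cexp (-s) * w)‖ ≤ ‖g w‖ * Real.exp (M * s) := by
  have hray : ∀ u : ℝ, 0 ≤ u → 0 < ‖cexp (-u) * w‖ ∧ ‖cexp (-u) * w‖ ≤ ‖w‖ := fun u hu ↦ by
    rw [norm_mul, ← ofReal_neg, norm_exp_ofReal]
    exact ⟨by positivity, mul_le_of_le_one_left (norm_nonneg w) (by simpa using hu)⟩
  have hderiv : ∀ u : ℝ, 0 ≤ u → HasDerivAt (fun u : ℝ ↦ g (cexp (-u) * w))
      (-((cexp (-u) * w) • deriv g (cexp (-u) * w))) u := fun u hu ↦ by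
    have hγ : HasDerivAt (fun u : ℝ ↦ cexp (-u) * w) (-(cexp (-u) * w)) u := by
      simpa using (((hasDerivAt_id (u : ℂ)).neg.cexp).mul_const w).comp_ofReal
    rw [← neg_smul]
    exact (hg _ (hray u hu).1 (hray u hu).2).hasDerivAt.scomp u hγ
  have := norm_le_gronwallBound_of_norm_deriv_right_le (δ := ‖g w‖) (K := M) (ε := 0)
    (fun u hu ↦ (hderiv u hu.1).continuousAt.continuousWithinAt)
    (fun u hu ↦ (hderiv u hu.1).hasDerivWithinAt) (by simp)
    (fun u hu ↦ by
      rw [norm_neg, add_zero]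
      exact hgM _ (hray u hu.1).1 (hray u hu.1).2) s ⟨hs, le_rfl⟩
  rwa [gronwallBound_ε0, sub_zero] at this

theorem norm_pow_smul_le_of_norm_smul_deriv_le {g : ℂ → E} {r C : ℝ} {n : ℕ}
    (hg : ∀ z : ℂ, 0 < ‖z‖ → ‖z‖ ≤ r → DifferentiableAt ℂ g z)
    (hgn : ∀ z : ℂ, 0 < ‖z‖ → ‖z‖ ≤ r → ‖z • deriv g z‖ ≤ n * ‖g z‖)
    (hC : ∀ w : ℂ, ‖w‖ = r → ‖g w‖ ≤ C) {z : ℂ} (hz : 0 < ‖z‖) (hzr : ‖z‖ ≤ r) :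
    ‖z ^ n • g z‖ ≤ r ^ n * C := by
  set x := r / ‖z‖
  have hx : 1 ≤ x := (one_le_div hz).2 hzr
  set w : ℂ := (x : ℂ) * z
  have hw : ‖w‖ = r := by
    simp [w, x, abs_of_pos (hz.trans_le hzr), hz.ne']
  have hzw : cexp (-(Real.log x : ℂ)) * w = z := by
    rw [← ofReal_neg, ← ofReal_exp, Real.exp_neg, Real.exp_log (by positivity), ← mul_assoc,
      ← ofReal_mul, inv_mul_cancel₀ (by positivity), ofReal_one, one_mul]
  have hgz := hzw ▸ norm_le_mul_exp_of_norm_smul_deriv_le (g := g) (w := w)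
    (norm_pos_iff.1 (hw ▸ hz.trans_le hzr)) (hw ▸ hg) (hw ▸ hgn) (Real.log_nonneg hx)
  rw [Real.exp_nat_mul, Real.exp_log (by positivity)] at hgz
  calc ‖z ^ n • g z‖ = ‖z‖ ^ n * ‖g z‖ := by rw [norm_smul, norm_pow]
    _ ≤ ‖z‖ ^ n * (C * x ^ n) := by gcongr; exact hgz.trans (by gcongr; exact hC w hw)
    _ = r ^ n * C := by rw [div_pow]; field_simp

end

/-- Lemma 1: if `g` is holomorphic and nowhere vanishing on the punctured unit disk
and `z * g'(z)/g(z)` extends to a function `h` holomorphic on the unit disk,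
then `g` is meromorphic at `0`. -/
theorem meromorphicAt_of_z_logDeriv_extends_holomorphic
    (g h : ℂ → ℂ)
    (hg : ∀ z : ℂ, 0 < ‖z‖ → ‖z‖ < 1 → DifferentiableAt ℂ g z)
    (hg0 : ∀ z : ℂ, 0 < ‖z‖ → ‖z‖ < 1 → g z ≠ 0)
    (hh : ∀ z : ℂ, ‖z‖ < 1 → DifferentiableAt ℂ h z)
    (heq : ∀ z : ℂ, 0 < ‖z‖ → ‖z‖ < 1 → h z = z * deriv g z / g z) :
    MeromorphicAt g 0 := by
  have hr : (1 / 2 : ℝ) < 1 := by norm_num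
  obtain ⟨M, hM⟩ := (isCompact_closedBall (0 : ℂ) (1 / 2)).exists_bound_of_continuousOn
    fun z hz ↦ (hh z ((mem_closedBall_zero_iff.1 hz).trans_lt hr)).continuousAt.continuousWithinAt
  obtain ⟨n, hn⟩ := exists_nat_ge M
  obtain ⟨C, hC⟩ := (isCompact_sphere (0 : ℂ) (1 / 2)).exists_bound_of_continuousOn
    fun z hz ↦ (hg z (by simp_all) (by simp_all)).continuousAt.continuousWithinAt
  have hgn : ∀ z : ℂ, 0 < ‖z‖ → ‖z‖ ≤ 1 / 2 → ‖z • deriv g z‖ ≤ n * ‖g z‖ := by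
    intro z hz0 hz
    have hz1 := hz.trans_lt hr
    rw [smul_eq_mul, ← div_mul_cancel₀ (z * deriv g z) (hg0 z hz0 hz1), ← heq z hz0 hz1, norm_mul]
    gcongr
    exact (hM z (mem_closedBall_zero_iff.2 hz)).trans hn
  have hnear : ∀ᶠ z in 𝓝[≠] (0 : ℂ), 0 < ‖z‖ ∧ ‖z‖ ≤ 1 / 2 := by
    filter_upwards [self_mem_nhdsWithin,
      nhdsWithin_le_nhds (Metric.closedBall_mem_nhds (0 : ℂ) one_half_pos)] with z hz0 hz
    exact ⟨norm_pos_iff.2 hz0, mem_closedBall_zero_iff.1 hz⟩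
  refine Complex.meromorphicAt_of_isBoundedUnder_pow_smul (n := n)
    (hnear.mono fun z hz ↦ hg z hz.1 (hz.2.trans_lt hr))
    (isBoundedUnder_of_eventually_le (a := (1 / 2) ^ n * C) ?_)
  filter_upwards [hnear] with z hz
  rw [sub_zero]
  exact norm_pow_smul_le_of_norm_smul_deriv_le (fun z hz0 hz ↦ hg z hz0 (hz.trans_lt hr)) hgn
    (fun w hw ↦ hC w (mem_sphere_zero_iff_norm.2 hw)) hz.1 hz.2
end

section
/- Let g : ℂ → ℂ be holomorphic and nowhere vanishing on the punctured unit disk D* = {z ∈ ℂ : 0 < |z| < 1}, and suppose there is a function h : ℂ → ℂ holomorphic on the unit disk D = {z ∈ ℂ : |z| < 1} such that h(z) = z · g'(z)/g(z) for all z ∈ D*. Then g has moderate growth at 0: there exist a constant C > 0 and a natural number N such that ‖g(z)‖ ≤ C · ‖z‖^(−N) for all z with 0 < ‖z‖ ≤ 1/2. -/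
open Complex

/-!
In the logarithmic coordinate `f σ = g (exp (-σ) * c)` along the ray through `c`, the equation
`z g' = h g` reads `f' = -h (exp (-σ) * c) • f`, a linear equation with bounded coefficient.
Gronwall's inequality then gives `‖g (t * c)‖ ≤ ‖g c‖ * t ^ (-K)` for `0 < t ≤ 1` when `‖h‖ ≤ K`
on the segment; taking `‖c‖ = 1 / 2` and bounding `g` on that circle yields the estimate.
-/

theorem Real.rpow_neg_le_zpow_neg_natCeil {r x K : ℝ} (hr : 0 < r) (hrx : r ≤ x) (hx : x ≤ 1) :
    x ^ (-K) ≤ r ^ (-(⌈K⌉₊ : ℤ)) :=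
  calc x ^ (-K) ≤ x ^ (-(⌈K⌉₊ : ℝ)) :=
        Real.rpow_le_rpow_of_exponent_ge (hr.trans_le hrx) hx (neg_le_neg (Nat.le_ceil K))
    _ ≤ r ^ (-(⌈K⌉₊ : ℝ)) := Real.rpow_le_rpow_of_nonpos hr hrx (by simp)
    _ = r ^ (-(⌈K⌉₊ : ℤ)) := Real.rpow_neg_natCast r _

theorem norm_le_mul_rpow_of_smul_deriv_eq {E : Type*} [NormedAddCommGroup E] [NormedSpace ℂ E]
    {g : ℂ → E} {h : ℂ → ℂ} {c : ℂ} {K t : ℝ} (ht : 0 < t) (ht1 : t ≤ 1)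
    (hg : ∀ s ∈ Set.Icc t 1, DifferentiableAt ℂ g (s * c))
    (hgh : ∀ s ∈ Set.Icc t 1, (s * c) • deriv g (s * c) = h (s * c) • g (s * c))
    (hK : ∀ s ∈ Set.Icc t 1, ‖h (s * c)‖ ≤ K) :
    ‖g (t * c)‖ ≤ ‖g c‖ * t ^ (-K) := by
  set S := -Real.log t
  set ζ : ℝ → ℂ := fun σ ↦ (Real.exp (-σ) : ℂ) * c
  have hζ_mem : ∀ σ ∈ Set.Icc 0 S, Real.exp (-σ) ∈ Set.Icc t 1 := fun σ hσ ↦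
    ⟨by simpa [S, Real.exp_log ht] using Real.exp_le_exp.2 (neg_le_neg hσ.2),
      Real.exp_le_one_iff.2 (neg_nonpos.2 hσ.1)⟩
  have hζ_deriv (σ : ℝ) : HasDerivAt ζ (-ζ σ) σ := by
    have := ((Real.hasDerivAt_exp (-σ)).comp σ (hasDerivAt_neg σ)).ofReal_comp.mul_const c
    refine this.congr_deriv ?_
    push_cast [ζ]
    ring
  have hf_deriv (σ) (hσ : σ ∈ Set.Icc 0 S) : HasDerivAt (g ∘ ζ) (-(h (ζ σ) • g (ζ σ))) σ := by
    have := (hg _ (hζ_mem σ hσ)).hasDerivAt.scomp σ (hζ_deriv σ)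
    rwa [neg_smul, hgh _ (hζ_mem σ hσ)] at this
  have gronwall := norm_le_gronwallBound_of_norm_deriv_right_le (f := g ∘ ζ) (δ := ‖g c‖)
    (K := K) (ε := 0) (fun σ hσ ↦ (hf_deriv σ hσ).continuousAt.continuousWithinAt)
    (fun σ hσ ↦ (hf_deriv σ (Set.Ico_subset_Icc_self hσ)).hasDerivWithinAt)
    (by simp [ζ])
    (fun σ hσ ↦ by
      rw [norm_neg, norm_smul, add_zero]
      exact mul_le_mul_of_nonneg_right (hK _ (hζ_mem σ (Set.Ico_subset_Icc_self hσ)))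
        (norm_nonneg _))
    S ⟨neg_nonneg.2 (Real.log_nonpos ht.le ht1), le_rfl⟩
  convert gronwall using 2
  · simp only [Function.comp_apply, ζ, S, neg_neg, Real.exp_log ht]
  · rw [gronwallBound_ε0, sub_zero, Real.rpow_def_of_pos ht, mul_comm K, neg_mul_comm]

/-- Moderate growth estimate: if `g` is holomorphic and nowhere vanishing on the
punctured unit disk and `z * g'(z)/g(z)` extends to a function `h` holomorphic on the
unit disk, then `g` has moderate growth at `0`. -/
theorem moderate_growth_of_z_logDeriv_extends_holomorphic
    (g h : ℂ → ℂ)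
    (hg : ∀ z : ℂ, 0 < ‖z‖ → ‖z‖ < 1 → DifferentiableAt ℂ g z)
    (hg0 : ∀ z : ℂ, 0 < ‖z‖ → ‖z‖ < 1 → g z ≠ 0)
    (hh : ∀ z : ℂ, ‖z‖ < 1 → DifferentiableAt ℂ h z)
    (heq : ∀ z : ℂ, 0 < ‖z‖ → ‖z‖ < 1 → h z = z * deriv g z / g z) :
    ∃ C : ℝ, 0 < C ∧ ∃ N : ℕ,
      ∀ z : ℂ, 0 < ‖z‖ → ‖z‖ ≤ 1 / 2 → ‖g z‖ ≤ C * ‖z‖ ^ (-(N : ℤ)) := by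
  obtain ⟨K, hK⟩ := (isCompact_closedBall (0 : ℂ) (1 / 2)).exists_bound_of_continuousOn
    fun z hz ↦ (hh z (by rw [mem_closedBall_zero_iff] at hz; linarith)).continuousAt
      |>.continuousWithinAt
  obtain ⟨C, hC⟩ := (isCompact_sphere (0 : ℂ) (1 / 2)).exists_bound_of_continuousOn
    fun z hz ↦ (hg z (by rw [mem_sphere_zero_iff_norm] at hz; linarith)
      (by rw [mem_sphere_zero_iff_norm] at hz; linarith)).continuousAt.continuousWithinAt
  refine ⟨max C 1, by positivity, ⌈K⌉₊, fun z hz hz2 ↦ ?_⟩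
  set t := 2 * ‖z‖
  set c := z / (t : ℂ)
  have ht : 0 < t := by positivity
  have hc : ‖c‖ = 1 / 2 := by
    simp only [c, t, norm_div, Complex.norm_real, Real.norm_eq_abs, abs_of_pos ht]
    field_simp
  have hz_eq : z = t * c := (mul_div_cancel₀ z (ofReal_ne_zero.2 ht.ne')).symm
  have hnorm (s) (hs : s ∈ Set.Icc t 1) : ‖(s : ℂ) * c‖ = s / 2 := by
    rw [norm_mul, hc, Complex.norm_real, Real.norm_eq_abs, abs_of_pos (ht.trans_le hs.1)]
    ring
  have hD (s) (hs : s ∈ Set.Icc t 1) : 0 < ‖(s : ℂ) * c‖ ∧ ‖(s : ℂ) * c‖ < 1 := by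
    rw [hnorm s hs]
    constructor <;> linarith [hs.1, hs.2]
  have growth := norm_le_mul_rpow_of_smul_deriv_eq (g := g) (h := h) ht (by linarith)
    (fun s hs ↦ hg _ (hD s hs).1 (hD s hs).2)
    (fun s hs ↦ by
      rw [smul_eq_mul, smul_eq_mul, heq _ (hD s hs).1 (hD s hs).2,
        div_mul_cancel₀ _ (hg0 _ (hD s hs).1 (hD s hs).2)])
    (fun s hs ↦ hK _ (mem_closedBall_zero_iff.2 (by rw [hnorm s hs]; linarith [hs.2])))
  calc ‖g z‖ = ‖g (t * c)‖ := by rw [← hz_eq]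
    _ ≤ ‖g c‖ * t ^ (-K) := growth
    _ ≤ max C 1 * ‖z‖ ^ (-(⌈K⌉₊ : ℤ)) :=
      mul_le_mul ((hC c (mem_sphere_zero_iff_norm.2 hc)).trans (le_max_left _ _))
        (Real.rpow_neg_le_zpow_neg_natCeil hz (by linarith) (by linarith)) (by positivity)
        (by positivity)
end

section
/- Let g : ℂ → ℂ be holomorphic and nowhere vanishing on the punctured unit disk D* = {z ∈ ℂ : 0 < |z| < 1}, and suppose there is a function h : ℂ → ℂ holomorphic on the unit disk D = {z ∈ ℂ : |z| < 1} such that h(z) = z · g'(z)/g(z) for all z ∈ D*. Then there exist an integer m and a function u : ℂ → ℂ that is holomorphic and nowhere vanishing on D such that g(z) = z^m · u(z) for all z ∈ D*. -/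
open Complex Metric Set

/-! The function `φ = (h - h 0) / z` is holomorphic on the disk, so it has a primitive `Φ` there,
and `v = g e^{-Φ}` satisfies `z v' = h(0) v` on the punctured disk. Along a circle such a `v`
picks up the factor `e^{2πi h(0)}`, so `h 0` is an integer `m`; then `z^{-m} v` has zero
derivative on the connected punctured disk, hence `g = c z^m e^{Φ}`. -/

namespace Complex

lemma ball_zero_diff_zero_eq_exp_image {r : ℝ} (hr : 0 < r) :
    ball (0 : ℂ) r \ {0} = exp '' {w | w.re < Real.log r} := by
  ext z
  simp only [mem_sdiff, mem_ball_zero_iff, mem_singleton_iff, mem_image, mem_ofPred_eq]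
  constructor
  · rintro ⟨hzr, hz⟩
    refine ⟨log z, ?_, exp_log hz⟩
    rw [log_re]
    exact Real.log_lt_log (norm_pos_iff.mpr hz) hzr
  · rintro ⟨w, hw, rfl⟩
    refine ⟨?_, exp_ne_zero w⟩
    rw [norm_exp]
    exact (Real.lt_log_iff_exp_lt hr).mp hw

lemma isPreconnected_ball_zero_diff_zero (r : ℝ) : IsPreconnected (ball (0 : ℂ) r \ {0}) := by
  rcases le_or_gt r 0 with hr | hr
  · simp [ball_eq_empty.mpr hr, isPreconnected_empty]
  · rw [ball_zero_diff_zero_eq_exp_image hr]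
    exact (convex_halfSpace_re_lt _).isPreconnected.image _ continuous_exp.continuousOn

lemma exists_int_eq_of_hasDerivAt_div_mul {f : ℂ → ℂ} {a : ℂ} {r : ℝ} (hr : 0 < r)
    (hf : ∀ z ∈ sphere (0 : ℂ) r, HasDerivAt f (a / z * f z) z) (hfr : f r ≠ 0) :
    ∃ m : ℤ, a = m := by
  -- `f (circleMap 0 r t) = f r * exp (a * I * t)`, and the left side is `2π`-periodic
  have hF (t : ℝ) :
      HasDerivAt (fun s : ℝ ↦ f (circleMap 0 r s) * exp (-(a * I * s))) 0 t := by
    have hc : HasDerivAt (f ∘ circleMap 0 r) (a * I * f (circleMap 0 r t)) t := by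
      refine ((hf _ (circleMap_mem_sphere 0 hr.le t)).comp t
        (hasDerivAt_circleMap 0 r t)).congr_deriv ?_
      have hct : circleMap 0 r t ≠ 0 := circleMap_ne_center hr.ne'
      field_simp
    have hexp := ((hasDerivAt_id (t : ℂ)).comp_ofReal.const_mul (a * I)).neg.cexp
    refine (hc.mul hexp).congr_deriv ?_
    simp only [id_eq, Pi.neg_apply, Function.comp_apply, mul_one, mul_neg]
    ring
  have hperiod := is_const_of_deriv_eq_zero (fun t ↦ (hF t).differentiableAt)
    (fun t ↦ (hF t).deriv) (2 * Real.pi) 0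
  have hc : circleMap 0 r (2 * Real.pi) = circleMap 0 r 0 := by
    simpa using periodic_circleMap 0 r 0
  rw [hc] at hperiod
  simp only [circleMap_zero, ofReal_zero, zero_mul, exp_zero, mul_one, mul_zero, neg_zero]
    at hperiod
  obtain ⟨n, hn⟩ := exp_eq_one_iff.mp (mul_left_cancel₀ hfr (hperiod.trans (mul_one _).symm))
  refine ⟨-n, ?_⟩
  have : (2 * Real.pi * I : ℂ) ≠ 0 := by simp [Real.pi_ne_zero]
  apply mul_right_cancel₀ this
  push_cast at hn ⊢
  linear_combination -hn

end Complex

lemma IsOpen.exists_eqOn_const_mul_zpow {f : ℂ → ℂ} {U : Set ℂ} (hU : IsOpen U)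
    (hU' : IsPreconnected U) (hU0 : (0 : ℂ) ∉ U) {m : ℤ}
    (hf : ∀ z ∈ U, HasDerivAt f (m / z * f z) z) :
    ∃ c, ∀ z ∈ U, f z = c * z ^ m := by
  have hz : ∀ z ∈ U, z ≠ 0 := fun z hz h ↦ hU0 (h ▸ hz)
  have hderiv (z : ℂ) (hzU : z ∈ U) : HasDerivAt (fun w ↦ w ^ (-m) * f w) 0 z := by
    refine ((hasDerivAt_zpow (-m) z (.inl (hz z hzU))).mul (hf z hzU)).congr_deriv ?_
    rw [zpow_sub_one₀ (hz z hzU)]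
    field_simp
    push_cast
    ring
  obtain ⟨c, hc⟩ := hU.exists_is_const_of_deriv_eq_zero hU'
    (fun z hzU ↦ (hderiv z hzU).differentiableAt.differentiableWithinAt)
    (fun z hzU ↦ (hderiv z hzU).deriv)
  refine ⟨c, fun z hzU ↦ ?_⟩
  rw [← hc z hzU, mul_right_comm, ← zpow_add₀ (hz z hzU), neg_add_cancel, zpow_zero, one_mul]

lemma hasDerivAt_mul_exp_neg_of_hasDerivAt_dslope {g h Φ : ℂ → ℂ} {z : ℂ} (hz : z ≠ 0)
    (hg : DifferentiableAt ℂ g z) (hgz : g z ≠ 0) (heq : h z = z * deriv g z / g z)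
    (hΦ : HasDerivAt Φ (dslope h 0 z) z) :
    HasDerivAt (fun w ↦ g w * exp (-Φ w)) (h 0 / z * (g z * exp (-Φ z))) z := by
  refine (hg.hasDerivAt.mul hΦ.neg.cexp).congr_deriv ?_
  rw [dslope_of_ne _ hz, slope_def_field, heq]
  field_simp
  simp only [Pi.neg_apply]
  ring

/-- Sharp form of Lemma 1 for nowhere vanishing `g`: under the same hypotheses,
`g(z) = z^m · u(z)` on the punctured unit disk for some integer `m` and some
holomorphic nowhere vanishing `u` on the unit disk. -/
theorem exists_zpow_mul_unit_of_z_logDeriv_extends_holomorphic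
    (g h : ℂ → ℂ)
    (hg : ∀ z : ℂ, 0 < ‖z‖ → ‖z‖ < 1 → DifferentiableAt ℂ g z)
    (hg0 : ∀ z : ℂ, 0 < ‖z‖ → ‖z‖ < 1 → g z ≠ 0)
    (hh : ∀ z : ℂ, ‖z‖ < 1 → DifferentiableAt ℂ h z)
    (heq : ∀ z : ℂ, 0 < ‖z‖ → ‖z‖ < 1 → h z = z * deriv g z / g z) :
    ∃ (m : ℤ) (u : ℂ → ℂ),
      (∀ z : ℂ, ‖z‖ < 1 → DifferentiableAt ℂ u z) ∧
      (∀ z : ℂ, ‖z‖ < 1 → u z ≠ 0) ∧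
      (∀ z : ℂ, 0 < ‖z‖ → ‖z‖ < 1 → g z = z ^ m * u z) := by
  have hD {z : ℂ} (hz : z ∈ ball (0 : ℂ) 1 \ {0}) : 0 < ‖z‖ ∧ ‖z‖ < 1 :=
    ⟨norm_pos_iff.mpr hz.2, mem_ball_zero_iff.mp hz.1⟩
  obtain ⟨Φ, hΦ⟩ := ((differentiableOn_dslope (ball_mem_nhds 0 one_pos)).mpr
    fun z hz ↦ (hh z (mem_ball_zero_iff.mp hz)).differentiableWithinAt).isExactOn_ball
  have hv : ∀ z ∈ ball (0 : ℂ) 1 \ {0},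
      HasDerivAt (fun w ↦ g w * exp (-Φ w)) (h 0 / z * (g z * exp (-Φ z))) z :=
    fun z hz ↦ hasDerivAt_mul_exp_neg_of_hasDerivAt_dslope hz.2 (hg z (hD hz).1 (hD hz).2)
      (hg0 z (hD hz).1 (hD hz).2) (heq z (hD hz).1 (hD hz).2) (hΦ z hz.1)
  have hhalf : ((1 / 2 : ℝ) : ℂ) ∈ ball (0 : ℂ) 1 \ {0} := by norm_num
  obtain ⟨m, hm⟩ := exists_int_eq_of_hasDerivAt_div_mul (r := 1 / 2) one_half_pos
    (fun z hz ↦ hv z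
      ⟨sphere_subset_ball one_half_lt_one hz, ne_of_mem_sphere hz one_half_pos.ne'⟩)
    (mul_ne_zero (hg0 _ (hD hhalf).1 (hD hhalf).2) (exp_ne_zero _))
  obtain ⟨c, hc⟩ := isOpen_ball.sdiff isClosed_singleton |>.exists_eqOn_const_mul_zpow
    (isPreconnected_ball_zero_diff_zero 1) (fun h0 ↦ h0.2 rfl) (hm ▸ hv)
  have hc0 : c ≠ 0 := by
    rintro rfl
    have := hc _ hhalf
    rw [zero_mul, mul_eq_zero] at this
    exact this.elim (hg0 _ (hD hhalf).1 (hD hhalf).2) (exp_ne_zero _)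
  refine ⟨m, fun z ↦ c * exp (Φ z), fun z hz ↦ ?_,
    fun z _ ↦ mul_ne_zero hc0 (exp_ne_zero _), fun z hz0 hz1 ↦ ?_⟩
  · exact ((hΦ z (mem_ball_zero_iff.mpr hz)).differentiableAt.cexp).const_mul c
  · have hgz := hc z ⟨mem_ball_zero_iff.mpr hz1, norm_pos_iff.mp hz0⟩
    rw [exp_neg, ← div_eq_mul_inv, div_eq_iff (exp_ne_zero _)] at hgz
    rw [hgz]
    ring
end
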